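/- (Fixed points of refinements.) Let h be a refinement of f on X = ∏_j {0,…,m_j} (with no self-inhibited multivalued component, constructed via the DNF threshold parameterisation). If ω ∈ {0,1}^n is a fixed point of f, then ω' ∈ X, obtained by replacing each coordinate ω_j = 1 by m_j, is a fixed point of h. Conversely, every fixed point of h arises this way: any fixed point x of h has all coordinates in {0, m_j}, and the corresponding Boolean state is a fixed point of f. -/

import Mathlib

/-- Activity levels of the most permissive scheme: 0, 1, increasing, decreasing. -/
inductive MPLevel : Type
  | zero | one | inc | dec
deriving DecidableEq

/-- The set γ(x̂) of Boolean states compatible with an m.p. state x̂. -/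
def mpGamma {n : ℕ} (x : Fin n → MPLevel) : Set (Fin n → Bool) :=
  {x' | ∀ j, (x j = MPLevel.zero → x' j = false) ∧ (x j = MPLevel.one → x' j = true)}

/-- The set α(x) of Boolean states compatible with a multivalued state x. -/
def mvAlpha {n : ℕ} (m x : Fin n → ℕ) : Set (Fin n → Bool) :=
  {x' | ∀ j, (x j = 0 → x' j = false) ∧ (x j = m j → x' j = true)}

/-- Coordinatewise embedding of Boolean states into m.p. states. -/
def embBM {n : ℕ} (x : Fin n → Bool) : Fin n → MPLevel :=
  fun j => if x j then MPLevel.one else MPLevel.zero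

/-- Embedding of a Boolean state into X = ∏ {0,…,m_j}, sending 1 to m_j. -/
def embX {n : ℕ} (m : Fin n → ℕ) (x : Fin n → Bool) : Fin n → ℕ :=
  fun j => if x j then m j else 0

/-- Transition of the most permissive dynamics of f at coordinate j0. -/
def mpTransAt {n : ℕ} (f : (Fin n → Bool) → Fin n → Bool) (j0 : Fin n)
    (x y : Fin n → MPLevel) : Prop :=
  (∀ j, j ≠ j0 → y j = x j) ∧
    (((x j0 = MPLevel.zero ∨ x j0 = MPLevel.dec) ∧ (∃ x' ∈ mpGamma x, f x' j0 = true) ∧ y j0 = MPLevel.inc) ∨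
     ((x j0 = MPLevel.one ∨ x j0 = MPLevel.inc) ∧ (∃ x' ∈ mpGamma x, f x' j0 = false) ∧ y j0 = MPLevel.dec) ∨
     (x j0 = MPLevel.inc ∧ y j0 = MPLevel.one) ∨
     (x j0 = MPLevel.dec ∧ y j0 = MPLevel.zero))

/-- Transition of the most permissive dynamics of f. -/
def mpTrans {n : ℕ} (f : (Fin n → Bool) → Fin n → Bool) (x y : Fin n → MPLevel) : Prop :=
  ∃ j0, mpTransAt f j0 x y

/-- Transition of the partial J-most-permissive dynamics of f at coordinate j0. -/
def pmpTransAt {n : ℕ} (J : Set (Fin n)) (f : (Fin n → Bool) → Fin n → Bool) (j0 : Fin n)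
    (x y : Fin n → MPLevel) : Prop :=
  (∀ j, j ≠ j0 → y j = x j) ∧
    (((x j0 = MPLevel.zero ∨ x j0 = MPLevel.dec) ∧ (∃ x' ∈ mpGamma x, f x' j0 = true) ∧ y j0 = MPLevel.inc) ∨
     ((x j0 = MPLevel.one ∨ x j0 = MPLevel.inc) ∧ (∃ x' ∈ mpGamma x, f x' j0 = false) ∧ y j0 = MPLevel.dec) ∨
     (x j0 = MPLevel.inc ∧ y j0 = MPLevel.one) ∨
     (x j0 = MPLevel.dec ∧ y j0 = MPLevel.zero) ∨
     (j0 ∉ J ∧ x j0 = MPLevel.zero ∧ (∃ x' ∈ mpGamma x, f x' j0 = true) ∧ y j0 = MPLevel.one) ∨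
     (j0 ∉ J ∧ x j0 = MPLevel.one ∧ (∃ x' ∈ mpGamma x, f x' j0 = false) ∧ y j0 = MPLevel.zero))

/-- Transition of the partial J-most-permissive dynamics of f. -/
def pmpTrans {n : ℕ} (J : Set (Fin n)) (f : (Fin n → Bool) → Fin n → Bool)
    (x y : Fin n → MPLevel) : Prop :=
  ∃ j0, pmpTransAt J f j0 x y

/-- A state of X_{J m.p.}: coordinates outside J are Boolean. -/
def inXJ {n : ℕ} (J : Set (Fin n)) (x : Fin n → MPLevel) : Prop :=
  ∀ j, j ∉ J → (x j = MPLevel.zero ∨ x j = MPLevel.one)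

/-- Asynchronous transition of a Boolean model f. -/
def asyncTransB {n : ℕ} (f : (Fin n → Bool) → Fin n → Bool) (x y : Fin n → Bool) : Prop :=
  ∃ j0, f x j0 ≠ x j0 ∧ y j0 = f x j0 ∧ ∀ j, j ≠ j0 → y j = x j

/-- Asynchronous transition of a multivalued model h (one coordinate moves by 1 toward its target). -/
def asyncTrans {n : ℕ} (h : (Fin n → ℕ) → Fin n → ℕ) (x y : Fin n → ℕ) : Prop :=
  ∃ j0, h x j0 ≠ x j0 ∧ (∀ j, j ≠ j0 → y j = x j) ∧
    ((x j0 < h x j0 ∧ y j0 = x j0 + 1) ∨ (h x j0 < x j0 ∧ y j0 = x j0 - 1))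

/-- An m.p. state x̂ is compatible with a multivalued state x. -/
def mpCompat {n : ℕ} (m x : Fin n → ℕ) (xh : Fin n → MPLevel) : Prop :=
  ∀ j, (x j = 0 → xh j = MPLevel.zero) ∧ (x j = m j → xh j = MPLevel.one) ∧
    (0 < x j → x j < m j → (xh j = MPLevel.inc ∨ xh j = MPLevel.dec))

/-- h is a multivalued model on X = ∏ {0,…,m_j}: maps X to X, moving each coordinate by at most 1. -/
def isMVModel {n : ℕ} (m : Fin n → ℕ) (h : (Fin n → ℕ) → Fin n → ℕ) : Prop :=
  ∀ x, (∀ j, x j ≤ m j) → ∀ j, h x j ≤ m j ∧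
    (h x j = x j ∨ h x j = x j + 1 ∨ h x j + 1 = x j)

/-- h is a multivalued refinement of the Boolean model f. -/
def isRefinement {n : ℕ} (m : Fin n → ℕ) (f : (Fin n → Bool) → Fin n → Bool)
    (h : (Fin n → ℕ) → Fin n → ℕ) : Prop :=
  ∀ x, (∀ j, x j ≤ m j) → ∀ j,
    (h x j < x j → ∃ x' ∈ mvAlpha m x, f x' j = false ∧ x' j = true) ∧
    (x j < h x j → ∃ x' ∈ mvAlpha m x, f x' j = true ∧ x' j = false)

/-- A literal in a DNF: a regulator index, a polarity, and a threshold (used in the multivalued reading). -/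
structure Lit (n : ℕ) where
  idx : Fin n
  pos : Bool
  thr : ℕ

/-- Boolean evaluation of a literal (threshold ignored). -/
def evalLitB {n : ℕ} (x : Fin n → Bool) (l : Lit n) : Bool :=
  if l.pos then x l.idx else !(x l.idx)

/-- Multivalued evaluation of a literal: x_idx ≥ thr+1 for a positive literal, x_idx < thr+1 otherwise. -/
def evalLitM {n : ℕ} (x : Fin n → ℕ) (l : Lit n) : Bool :=
  if l.pos then decide (l.thr + 1 ≤ x l.idx) else decide (x l.idx < l.thr + 1)

/-- Boolean evaluation of a DNF (list of conjunctive clauses). -/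
def evalDNFB {n : ℕ} (x : Fin n → Bool) (φ : List (List (Lit n))) : Bool :=
  φ.any fun c => c.all (evalLitB x)

/-- Multivalued evaluation of a DNF via the thresholds. -/
def evalDNFM {n : ℕ} (x : Fin n → ℕ) (φ : List (List (Lit n))) : Bool :=
  φ.any fun c => c.all (evalLitM x)

/-- Refinement built from the DNF threshold parameterisation:
h_j(x) = max(0, min(m_j, x_j + H_j(x))) with H_j(x) = +1 iff the multivalued DNF of f_j is true. -/
def hDNF {n : ℕ} (m : Fin n → ℕ) (φ : Fin n → List (List (Lit n)))
    (x : Fin n → ℕ) : Fin n → ℕ :=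
  fun j => if evalDNFM x (φ j) then min (m j) (x j + 1) else x j - 1

/-! Since `H_j` never vanishes, `h_j(x) = x_j` forces `x_j` to be the end of `{0, …, m_j}` towards
which `H_j(x)` points, so the fixed points of `h` are exactly the corners `x = embX m ω` with
`ω_j = [H_j(x) = +1]`. On a corner every threshold comparison `x_i ≥ thr + 1` (with `thr < m_i`)
reads the Boolean literal `ω_i`, so `H_j(embX m ω) = +1` iff `f_j(ω) = 1`, and the fixed-point
condition for `h` becomes `f ω = ω`. -/

lemma evalLitM_embX {n : ℕ} (m : Fin n → ℕ) (ω : Fin n → Bool) (l : Lit n)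
    (hl : l.thr + 1 ≤ m l.idx) :
    evalLitM (embX m ω) l = evalLitB ω l := by
  cases hp : l.pos <;> cases hω : ω l.idx <;> simp [evalLitM, evalLitB, embX, hp, hω] <;> omega

lemma evalDNFM_embX {n : ℕ} (m : Fin n → ℕ) (ω : Fin n → Bool) (φ : List (List (Lit n)))
    (hφ : ∀ c ∈ φ, ∀ l ∈ c, l.thr + 1 ≤ m l.idx) :
    evalDNFM (embX m ω) φ = evalDNFB ω φ := by
  rw [evalDNFM, evalDNFB, Bool.eq_iff_iff]
  simp only [List.any_eq_true, List.all_eq_true]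
  exact exists_congr fun c => and_congr_right fun hc => forall₂_congr fun l hl => by
    rw [evalLitM_embX m ω l (hφ c hc l hl)]

lemma hDNF_apply_eq_self_iff {n : ℕ} (m : Fin n → ℕ) (φ : Fin n → List (List (Lit n)))
    (x : Fin n → ℕ) (j : Fin n) :
    hDNF m φ x j = x j ↔ x j = if evalDNFM x (φ j) then m j else 0 := by
  unfold hDNF
  split <;> omega

lemma hDNF_eq_self_iff {n : ℕ} (m : Fin n → ℕ) (φ : Fin n → List (List (Lit n)))
    (x : Fin n → ℕ) :
    hDNF m φ x = x ↔ x = embX m fun j => evalDNFM x (φ j) := by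
  simp only [funext_iff, hDNF_apply_eq_self_iff, embX]

lemma embX_eq_zero_or_eq {n : ℕ} (m : Fin n → ℕ) (ω : Fin n → Bool) (j : Fin n) :
    embX m ω j = 0 ∨ embX m ω j = m j := by
  unfold embX
  split <;> simp

theorem refinement_fixed_points_general {n : ℕ} (m : Fin n → ℕ)
    (φ : Fin n → List (List (Lit n)))
    (f : (Fin n → Bool) → Fin n → Bool)
    (hf : ∀ x j, f x j = evalDNFB x (φ j))
    (hthr : ∀ j, ∀ c ∈ φ j, ∀ l ∈ c, l.thr + 1 ≤ m l.idx) :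
    (∀ ω : Fin n → Bool, f ω = ω → hDNF m φ (embX m ω) = embX m ω) ∧
    (∀ x : Fin n → ℕ, (∀ j, x j ≤ m j) → hDNF m φ x = x →
      (∀ j, x j = 0 ∨ x j = m j) ∧ ∃ ω : Fin n → Bool, f ω = ω ∧ x = embX m ω) := by
  have hf_corner : ∀ ω, (fun j => evalDNFM (embX m ω) (φ j)) = f ω := fun ω =>
    funext fun j => by rw [evalDNFM_embX m ω (φ j) (hthr j), hf]
  refine ⟨fun ω hω => ?_, fun x _ hx => ?_⟩
  · rw [hDNF_eq_self_iff, hf_corner, hω]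
  · set ω : Fin n → Bool := fun j => evalDNFM x (φ j)
    have hxω : x = embX m ω := (hDNF_eq_self_iff m φ x).1 hx
    refine ⟨hxω ▸ embX_eq_zero_or_eq m ω, ω, ?_, hxω⟩
    rw [← hf_corner, ← hxω]

/-- fixed points of refinements: for h built from the DNF threshold
parameterisation with no self-inhibited multivalued component, the fixed points of h are
exactly the embeddings (1 ↦ m_j) of the fixed points of f. -/
theorem refinement_fixed_points {n : ℕ} (m : Fin n → ℕ) (hm : ∀ j, 1 ≤ m j)
    (φ : Fin n → List (List (Lit n)))
    (f : (Fin n → Bool) → Fin n → Bool)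
    (hf : ∀ x j, f x j = evalDNFB x (φ j))
    (hthr : ∀ j, ∀ c ∈ φ j, ∀ l ∈ c, l.thr + 1 ≤ m l.idx)
    (hnsi : ∀ j, 1 < m j → ∀ c ∈ φ j, ∀ l ∈ c, l.idx ≠ j) :
    (∀ ω : Fin n → Bool, f ω = ω → hDNF m φ (embX m ω) = embX m ω) ∧
    (∀ x : Fin n → ℕ, (∀ j, x j ≤ m j) → hDNF m φ x = x →
      (∀ j, x j = 0 ∨ x j = m j) ∧ ∃ ω : Fin n → Bool, f ω = ω ∧ x = embX m ω) :=
  refinement_fixed_points_general m φ f hf hthr
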